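/- arXiv:2605.02561 — 4 statements merged into one kernel-verified Lean document; each statement's English description precedes it below -/
import Mathlib

section
/- Let $1 = \varepsilon_0 > \varepsilon_1 > \varepsilon_2 > \cdots$ be a strictly decreasing sequence of positive reals and let $K \in (1,2]$. Suppose that for every $m \geq 1$ we have $\sum_{j=1}^{m} \varepsilon_m/\varepsilon_j \leq K$. Then for all $1 \leq k \leq m$, $\varepsilon_m/\varepsilon_k \leq K (1 - K^{-1})^{m-k}$. -/
/-!
With `a n = ∑_{j=1}^n 1/ε_j`, the hypothesis says `ε_n a_n ≤ K`, i.e. `a_n ≤ K (a_n - a_{n-1})`,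
so `a_{n-1} ≤ (1 - K⁻¹) a_n`. Iterating gives `a_k ≤ (1 - K⁻¹)^(m-k) a_m`, and then
`ε_m / ε_k ≤ ε_m a_k ≤ (1 - K⁻¹)^(m-k) ε_m a_m ≤ K (1 - K⁻¹)^(m-k)`.
-/

open Finset

theorem le_pow_mul_of_le_mul_succ {a : ℕ → ℝ} {r : ℝ} (hr : 0 ≤ r)
    (h : ∀ n, a n ≤ r * a (n + 1)) {k m : ℕ} (hkm : k ≤ m) :
    a k ≤ r ^ (m - k) * a m := by
  induction m, hkm using Nat.le_induction with
  | base => simp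
  | succ m hkm ih =>
    calc a k ≤ r ^ (m - k) * a m := ih
      _ ≤ r ^ (m - k) * (r * a (m + 1)) := by gcongr; exact h m
      _ = r ^ (m + 1 - k) * a (m + 1) := by rw [Nat.sub_add_comm hkm, pow_succ]; ring

theorem sum_inv_le_mul_sum_inv_succ {ε : ℕ → ℝ} (hpos : ∀ j, 0 < ε j) {K : ℝ} (hK : 0 < K)
    {n : ℕ} (h : ε (n + 1) * ∑ j ∈ Icc 1 (n + 1), (ε j)⁻¹ ≤ K) :
    ∑ j ∈ Icc 1 n, (ε j)⁻¹ ≤ (1 - K⁻¹) * ∑ j ∈ Icc 1 (n + 1), (ε j)⁻¹ := by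
  rw [sum_Icc_succ_top (Nat.le_add_left 1 n)] at h ⊢
  set s := ∑ j ∈ Icc 1 n, (ε j)⁻¹
  have hx := hpos (n + 1)
  have hdiv : K⁻¹ * (s + (ε (n + 1))⁻¹) ≤ (ε (n + 1))⁻¹ := by
    rw [inv_mul_le_iff₀ hK, ← div_eq_mul_inv, le_div_iff₀ hx, mul_comm]
    exact h
  linarith

theorem stmt_0_general (ε : ℕ → ℝ) (hpos : ∀ j, 0 < ε j) (K : ℝ) (hK1 : 1 < K)
    (hsum : ∀ m : ℕ, 1 ≤ m → ∑ j ∈ Finset.Icc 1 m, ε m / ε j ≤ K) :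
    ∀ k m : ℕ, 1 ≤ k → k ≤ m → ε m / ε k ≤ K * (1 - K⁻¹) ^ (m - k) := by
  intro k m hk hkm
  set a : ℕ → ℝ := fun n => ∑ j ∈ Icc 1 n, (ε j)⁻¹
  have hbound : ∀ n, 1 ≤ n → ε n * a n ≤ K := fun n hn => by
    simpa only [a, mul_sum, div_eq_mul_inv] using hsum n hn
  have hcontract : ∀ n, a n ≤ (1 - K⁻¹) * a (n + 1) := fun n =>
    sum_inv_le_mul_sum_inv_succ hpos (by linarith) (hbound (n + 1) n.succ_pos)
  have hr : 0 ≤ 1 - K⁻¹ := sub_nonneg.2 (inv_le_one_of_one_le₀ hK1.le)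
  have hak : (ε k)⁻¹ ≤ a k :=
    single_le_sum (fun j _ => (inv_pos.2 (hpos j)).le) (mem_Icc.2 ⟨hk, le_rfl⟩)
  have hεm := (hpos m).le
  calc ε m / ε k ≤ ε m * a k := by rw [div_eq_mul_inv]; gcongr
    _ ≤ ε m * ((1 - K⁻¹) ^ (m - k) * a m) := by
      gcongr; exact le_pow_mul_of_le_mul_succ hr hcontract hkm
    _ = ε m * a m * (1 - K⁻¹) ^ (m - k) := by ring
    _ ≤ K * (1 - K⁻¹) ^ (m - k) := by gcongr; exact hbound m (hk.trans hkm)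

/-- If `1 = ε₀ > ε₁ > ⋯` are positive, `K ∈ (1,2]`, and `∑_{j=1}^m ε_m/ε_j ≤ K`
for every `m ≥ 1`, then `ε_m/ε_k ≤ K (1 - K⁻¹)^(m-k)` for all `1 ≤ k ≤ m`. -/
theorem stmt_0 (ε : ℕ → ℝ) (hpos : ∀ j, 0 < ε j) (hdec : StrictAnti ε)
    (hε0 : ε 0 = 1) (K : ℝ) (hK1 : 1 < K) (hK2 : K ≤ 2)
    (hsum : ∀ m : ℕ, 1 ≤ m → ∑ j ∈ Finset.Icc 1 m, ε m / ε j ≤ K) :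
    ∀ k m : ℕ, 1 ≤ k → k ≤ m → ε m / ε k ≤ K * (1 - K⁻¹) ^ (m - k) :=
  stmt_0_general ε hpos K hK1 hsum
end

section
/- Let $n \geq 1$ and let $(\delta_k)_{k \geq 0}$ be nonnegative reals with $[\delta]_0 = \sum_k \delta_k < \infty$ and $[\delta]_1 = \sum_k k\delta_k < \infty$. Let $C_0 > 0$ and suppose $(\delta_k^n)_{0 \leq k \leq n}$ are nonnegative reals satisfying $\delta_n^n \leq \delta_n$ and, for $0 \leq k \leq n-1$, the backward recursion $\delta_k^n \leq \delta_k + \delta_{k+1}^n + C_0 (\sum_{\ell=k+1}^n \delta_\ell)\, \delta_{k+1}^n + C_0 [\delta]_0 (\sum_{\ell=k+1}^n \delta_\ell)^2$. Then for all $0 \leq k \leq n$, $\delta_k^n \leq \exp(C_0 [\delta]_1)\,(1 + C_0 [\delta]_0 [\delta]_1)\, R_k^n$, where $R_k^n = \sum_{j=k}^n \delta_j$. -/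
lemma aux_swap (δ : ℕ → ℝ) : ∀ n : ℕ,
    ∑ ℓ ∈ Finset.Icc 1 n, ∑ j ∈ Finset.Icc ℓ n, δ j
      = ∑ j ∈ Finset.Icc 1 n, (j : ℝ) * δ j := by
  intro n
  induction n with
  | zero => simp
  | succ n ih =>
    have h1 : ∀ ℓ ∈ Finset.Icc 1 (n + 1),
        ∑ j ∈ Finset.Icc ℓ (n + 1), δ j
          = (∑ j ∈ Finset.Icc ℓ n, δ j) + δ (n + 1) := by
      intro ℓ hℓ
      simp only [Finset.mem_Icc] at hℓ
      exact Finset.sum_Icc_succ_top hℓ.2 δ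
    rw [Finset.sum_congr rfl h1, Finset.sum_add_distrib]
    have h2 : ∑ ℓ ∈ Finset.Icc 1 (n + 1), ∑ j ∈ Finset.Icc ℓ n, δ j
        = ∑ ℓ ∈ Finset.Icc 1 n, ∑ j ∈ Finset.Icc ℓ n, δ j := by
      rw [Finset.sum_Icc_succ_top (by omega : 1 ≤ n + 1)]
      simp [Finset.Icc_eq_empty_of_lt (by omega : n < n + 1)]
    have h3 : ∑ _ℓ ∈ Finset.Icc 1 (n + 1), δ (n + 1) = ((n : ℝ) + 1) * δ (n + 1) := by
      rw [Finset.sum_const, Nat.card_Icc]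
      simp [nsmul_eq_mul]
    rw [h2, ih, h3, Finset.sum_Icc_succ_top (by omega : 1 ≤ n + 1)]
    push_cast
    ring

/-- Control of the backward recursive system for the quantities `δ_k^n` (Lemma 3.2):
if `δ_n^n ≤ δ_n` and
`δ_k^n ≤ δ_k + δ_{k+1}^n + C₀ (∑_{ℓ=k+1}^n δ_ℓ) δ_{k+1}^n + C₀ [δ]₀ (∑_{ℓ=k+1}^n δ_ℓ)²`,
then `δ_k^n ≤ exp(C₀[δ]₁) (1 + C₀[δ]₀[δ]₁) R_k^n` with `R_k^n = ∑_{j=k}^n δ_j`. -/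
theorem stmt_3 (n : ℕ) (hn : 1 ≤ n) (δ : ℕ → ℝ) (hδ : ∀ k, 0 ≤ δ k)
    (hsum0 : Summable δ) (hsum1 : Summable (fun k : ℕ => (k : ℝ) * δ k))
    (C₀ : ℝ) (hC₀ : 0 < C₀) (d : ℕ → ℝ) (hd : ∀ k, 0 ≤ d k)
    (hdn : d n ≤ δ n)
    (hrec : ∀ k : ℕ, k ≤ n - 1 →
      d k ≤ δ k + d (k + 1) +
        C₀ * (∑ ℓ ∈ Finset.Icc (k + 1) n, δ ℓ) * d (k + 1) +
        C₀ * (∑' k : ℕ, δ k) * (∑ ℓ ∈ Finset.Icc (k + 1) n, δ ℓ) ^ 2) :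
    ∀ k : ℕ, k ≤ n →
      d k ≤ Real.exp (C₀ * ∑' j : ℕ, (j : ℝ) * δ j) *
        (1 + C₀ * (∑' j : ℕ, δ j) * ∑' j : ℕ, (j : ℝ) * δ j) *
        ∑ j ∈ Finset.Icc k n, δ j := by
  set D0 : ℝ := ∑' j : ℕ, δ j with hD0
  set D1 : ℝ := ∑' j : ℕ, (j : ℝ) * δ j with hD1
  set R : ℕ → ℝ := fun k => ∑ j ∈ Finset.Icc k n, δ j with hR
  set P : ℕ → ℝ := fun k => ∏ ℓ ∈ Finset.Icc (k + 1) n, (1 + C₀ * R ℓ) with hP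
  set Q : ℕ → ℝ := fun k => ∑ ℓ ∈ Finset.Icc (k + 1) n, (R ℓ) ^ 2 with hQ
  have hD0n : 0 ≤ D0 := tsum_nonneg hδ
  have hD1n : 0 ≤ D1 := tsum_nonneg fun j => mul_nonneg (Nat.cast_nonneg j) (hδ j)
  have hRn : ∀ k, 0 ≤ R k := fun k => Finset.sum_nonneg fun j _ => hδ j
  have hRmono : ∀ a b : ℕ, a ≤ b → R b ≤ R a := by
    intro a b hab
    exact Finset.sum_le_sum_of_subset_of_nonneg
      (Finset.Icc_subset_Icc_left hab) (fun j _ _ => hδ j)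
  have hIcc : ∀ a b : ℕ, a ≤ b → Finset.Icc a b = insert a (Finset.Icc (a + 1) b) := by
    intro a b hab
    rw [Finset.Icc_add_one_left_eq_Ioc, Finset.Ioc_insert_left hab]
  have hRsplit : ∀ k, k ≤ n → R k = δ k + R (k + 1) := by
    intro k hk
    simp only [hR]
    rw [hIcc k n hk, Finset.sum_insert (by simp)]
  have hP1 : ∀ k, 1 ≤ P k := by
    intro k
    simp only [hP]
    calc (1:ℝ) = ∏ _ℓ ∈ Finset.Icc (k + 1) n, 1 := by simp
      _ ≤ ∏ ℓ ∈ Finset.Icc (k + 1) n, (1 + C₀ * R ℓ) :=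
        Finset.prod_le_prod (fun ℓ _ => zero_le_one)
          (fun ℓ _ => by nlinarith [hRn ℓ, hC₀.le])
  have hSD1 : ∀ k, ∑ ℓ ∈ Finset.Icc (k + 1) n, R ℓ ≤ D1 := by
    intro k
    have h1 : ∑ ℓ ∈ Finset.Icc (k + 1) n, R ℓ ≤ ∑ ℓ ∈ Finset.Icc 1 n, R ℓ :=
      Finset.sum_le_sum_of_subset_of_nonneg
        (Finset.Icc_subset_Icc_left (by omega)) (fun j _ _ => hRn j)
    have h2 : ∑ ℓ ∈ Finset.Icc 1 n, R ℓ = ∑ j ∈ Finset.Icc 1 n, (j : ℝ) * δ j :=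
      aux_swap δ n
    have h3 : ∑ j ∈ Finset.Icc 1 n, (j : ℝ) * δ j ≤ D1 :=
      Summable.sum_le_tsum _ (fun j _ => mul_nonneg (Nat.cast_nonneg j) (hδ j)) hsum1
    linarith
  have hPexp : ∀ k, P k ≤ Real.exp (C₀ * D1) := by
    intro k
    have h1 : P k ≤ ∏ ℓ ∈ Finset.Icc (k + 1) n, Real.exp (C₀ * R ℓ) := by
      simp only [hP]
      apply Finset.prod_le_prod
      · intro ℓ _; nlinarith [hRn ℓ, hC₀.le]
      · intro ℓ _; linarith [Real.add_one_le_exp (C₀ * R ℓ)]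
    have h2 : ∏ ℓ ∈ Finset.Icc (k + 1) n, Real.exp (C₀ * R ℓ)
        = Real.exp (∑ ℓ ∈ Finset.Icc (k + 1) n, C₀ * R ℓ) := (Real.exp_sum _ _).symm
    have h3 : ∑ ℓ ∈ Finset.Icc (k + 1) n, C₀ * R ℓ ≤ C₀ * D1 := by
      rw [← Finset.mul_sum]
      exact mul_le_mul_of_nonneg_left (hSD1 k) hC₀.le
    calc P k ≤ Real.exp (∑ ℓ ∈ Finset.Icc (k + 1) n, C₀ * R ℓ) := h2 ▸ h1
      _ ≤ Real.exp (C₀ * D1) := Real.exp_le_exp.mpr h3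
  -- main backward induction
  have key : ∀ j : ℕ, j ≤ n → d (n - j) ≤ P (n - j) * (R (n - j) + C₀ * D0 * Q (n - j)) := by
    intro j
    induction j with
    | zero =>
      intro _
      have hPn : P n = 1 := by
        simp [hP, Finset.Icc_eq_empty_of_lt (by omega : n < n + 1)]
      have hQn : Q n = 0 := by
        simp [hQ, Finset.Icc_eq_empty_of_lt (by omega : n < n + 1)]
      have hRnn : R n = δ n := by simp [hR]
      simpa [hPn, hQn, hRnn] using hdn
    | succ j ih =>
      intro hj
      set k := n - (j + 1) with hk
      have hk1 : k + 1 = n - j := by omega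
      have hkn : k ≤ n - 1 := by omega
      have ihk : d (k + 1) ≤ P (k + 1) * (R (k + 1) + C₀ * D0 * Q (k + 1)) := by
        rw [hk1]; exact ih (by omega)
      have hrk := hrec k hkn
      have hRk : R k = δ k + R (k + 1) := hRsplit k (by omega)
      have hPk : P k = (1 + C₀ * R (k + 1)) * P (k + 1) := by
        simp only [hP]
        rw [hIcc (k + 1) n (by omega), Finset.prod_insert (by simp)]
      have hQk : Q k = (R (k + 1)) ^ 2 + Q (k + 1) := by
        simp only [hQ]
        rw [hIcc (k + 1) n (by omega), Finset.sum_insert (by simp)]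
      have hrk' : d k ≤ δ k + (1 + C₀ * R (k + 1)) * d (k + 1) + C₀ * D0 * (R (k + 1)) ^ 2 := by
        have : (∑ ℓ ∈ Finset.Icc (k + 1) n, δ ℓ) = R (k + 1) := rfl
        rw [this] at hrk
        nlinarith [hrk]
      have hA : 1 ≤ (1 + C₀ * R (k + 1)) * P (k + 1) := by
        nlinarith [hP1 (k + 1), hRn (k + 1), hC₀.le,
          mul_nonneg (mul_nonneg hC₀.le (hRn (k + 1))) (sub_nonneg.mpr (hP1 (k + 1)))]
      have hd1 : d (k + 1) ≤ P (k + 1) * (R (k + 1) + C₀ * D0 * Q (k + 1)) := ihk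
      rw [hPk, hRk, hQk]
      have hfac : 0 ≤ 1 + C₀ * R (k + 1) := by nlinarith [hRn (k + 1), hC₀.le]
      nlinarith [mul_le_mul_of_nonneg_left hd1 hfac, hδ k,
        mul_nonneg (mul_nonneg hC₀.le hD0n) (sq_nonneg (R (k + 1))),
        mul_le_mul_of_nonneg_right hA
          (add_nonneg (hδ k) (mul_nonneg (mul_nonneg hC₀.le hD0n) (sq_nonneg (R (k + 1)))))]
  intro k hk
  have hkey : d k ≤ P k * (R k + C₀ * D0 * Q k) := by
    have := key (n - k) (by omega)
    rwa [show n - (n - k) = k by omega] at this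
  have hQle : Q k ≤ D1 * R k := by
    have h1 : Q k ≤ R (k + 1) * ∑ ℓ ∈ Finset.Icc (k + 1) n, R ℓ := by
      rw [Finset.mul_sum]
      apply Finset.sum_le_sum
      intro ℓ hℓ
      simp only [Finset.mem_Icc] at hℓ
      have := hRmono (k + 1) ℓ hℓ.1
      nlinarith [hRn ℓ]
    have h2 : R (k + 1) * ∑ ℓ ∈ Finset.Icc (k + 1) n, R ℓ ≤ R k * D1 := by
      apply mul_le_mul (hRmono k (k + 1) (by omega)) (hSD1 k)
        (Finset.sum_nonneg fun j _ => hRn j) (hRn k)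
    nlinarith
  have hbr : R k + C₀ * D0 * Q k ≤ (1 + C₀ * D0 * D1) * R k := by
    nlinarith [mul_nonneg hC₀.le hD0n, hQle, hRn k]
  have hbrn : 0 ≤ R k + C₀ * D0 * Q k := by
    have : 0 ≤ Q k := Finset.sum_nonneg fun j _ => sq_nonneg _
    nlinarith [hRn k, mul_nonneg hC₀.le hD0n]
  calc d k ≤ P k * (R k + C₀ * D0 * Q k) := hkey
    _ ≤ Real.exp (C₀ * D1) * ((1 + C₀ * D0 * D1) * R k) := by
        apply mul_le_mul (hPexp k) hbr hbrn (Real.exp_nonneg _)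
    _ = Real.exp (C₀ * D1) * (1 + C₀ * D0 * D1) * R k := by ring
end

section
/- Let $(\delta_k)_{k\geq0}$ be nonnegative reals with $[\delta]_0 = \sum_k \delta_k < \infty$ and $[\delta]_1 = \sum_k k\delta_k < \infty$, and let $(\varepsilon_j)_{j\geq0}$ be a decreasing positive sequence with $\varepsilon_0 = 1$ satisfying $\varepsilon_\ell/\varepsilon_k \leq K(1-K^{-1})^{\ell-k}$ for some $K \in (1,2]$ and all $\ell \geq k \geq 0$. Then for every $m \geq 1$, $\sum_{\ell=m}^{\infty} \sum_{k=0}^{\ell} \frac{\varepsilon_\ell}{\varepsilon_k}\delta_k \leq 9\,([\delta]_0 + [\delta]_1)\,\max\{m^{-1},\ (1-K^{-1})^{m-1}\}$. -/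
/-!
Swap the two sums. For fixed `k` the sum over `ℓ ≥ max m k` is, by the geometric bound, at most
`K² q^(m - k) ≤ 4 q^(m - k)` with `q = 1 - K⁻¹ ≤ 1/2` (truncated subtraction: `m - k = max m k - k`).
If `m ≤ 2(k + 1)` this is at most `8(k + 1)/m`; otherwise `m ≤ 2(m - k) ≤ 2^(m - k)`, so it is
at most `4/m`. Summing against `δ k` produces `[δ]₀ + [δ]₁`.
-/

open scoped ENNReal
open Finset

theorem ENNReal.tsum_sum_range_add_eq (a : ℕ → ℕ → ℝ≥0∞) (m : ℕ) :
    ∑' ℓ, ∑ k ∈ range (m + ℓ + 1), a ℓ k = ∑' k, ∑' j, a (j + (k - m)) k := by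
  have hrange : ∀ ℓ, ∑ k ∈ range (m + ℓ + 1), a ℓ k
      = ∑' k, if k - m ≤ ℓ then a ℓ k else 0 := by
    intro ℓ
    rw [tsum_eq_sum (s := range (m + ℓ + 1)) fun k hk => if_neg (by rw [mem_range] at hk; omega)]
    exact sum_congr rfl fun k hk => (if_pos (by rw [mem_range] at hk; omega)).symm
  simp_rw [hrange]
  rw [ENNReal.tsum_comm]
  congr 1; ext k
  rw [← (add_left_injective (k - m)).tsum_eq]
  · simp
  · intro ℓ hℓ
    simp only [Function.mem_support, ne_eq, ite_eq_right_iff, Classical.not_imp] at hℓ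
    exact ⟨ℓ - (k - m), Nat.sub_add_cancel hℓ.1⟩

theorem Nat.two_mul_le_two_pow (e : ℕ) : 2 * e ≤ 2 ^ e := by
  cases e with
  | zero => simp
  | succ e => rw [pow_succ]; have := Nat.lt_two_pow_self (n := e); omega

theorem pow_sub_le_div {q : ℝ} (hq0 : 0 ≤ q) (hq : q ≤ 2⁻¹) {m : ℕ} (hm : 0 < m) (k : ℕ) :
    q ^ (m - k) ≤ 2 * (k + 1) / m := by
  rw [le_div_iff₀ (by exact_mod_cast hm), mul_comm]
  rcases le_or_gt m (2 * (k + 1)) with hmk | hmk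
  · calc (m : ℝ) * q ^ (m - k) ≤ m * 1 := by
          gcongr; exact pow_le_one₀ hq0 (hq.trans (by norm_num))
      _ ≤ 2 * (k + 1) := by rw [mul_one]; exact_mod_cast hmk
  · have hm : (m : ℝ) ≤ 2 ^ (m - k) := by
      exact_mod_cast (show m ≤ 2 * (m - k) by omega).trans (Nat.two_mul_le_two_pow _)
    calc (m : ℝ) * q ^ (m - k) ≤ 2 ^ (m - k) * 2⁻¹ ^ (m - k) := by gcongr
      _ = 1 := by rw [← mul_pow, mul_inv_cancel₀ two_ne_zero, one_pow]
      _ ≤ 2 * (k + 1) := by linarith [(k.cast_nonneg : (0 : ℝ) ≤ k)]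

theorem ENNReal.tsum_ofReal_one_sub_inv_pow {K : ℝ} (hK : 1 ≤ K) :
    ∑' j, ENNReal.ofReal (1 - K⁻¹) ^ j = ENNReal.ofReal K := by
  have hK0 : 0 < K := one_pos.trans_le hK
  rw [ENNReal.tsum_geometric, ← ENNReal.ofReal_one,
    ← ENNReal.ofReal_sub _ (sub_nonneg.2 (inv_le_one_of_one_le₀ hK)), sub_sub_self,
    ENNReal.ofReal_inv_of_pos hK0, inv_inv]

theorem tsum_ofReal_div_le_of_geometric {ε : ℕ → ℝ} {K : ℝ} (hK : 1 ≤ K)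
    (hgeo : ∀ k ℓ : ℕ, k ≤ ℓ → ε ℓ / ε k ≤ K * (1 - K⁻¹) ^ (ℓ - k)) (k e : ℕ) :
    ∑' j, ENNReal.ofReal (ε (k + e + j) / ε k) ≤ ENNReal.ofReal (K ^ 2 * (1 - K⁻¹) ^ e) := by
  have hK0 : 0 ≤ K := zero_le_one.trans hK
  have hq0 : 0 ≤ 1 - K⁻¹ := sub_nonneg.2 (inv_le_one_of_one_le₀ hK)
  have hterm : ∀ j, ENNReal.ofReal (ε (k + e + j) / ε k)
      ≤ ENNReal.ofReal (K * (1 - K⁻¹) ^ e) * ENNReal.ofReal (1 - K⁻¹) ^ j := by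
    intro j
    rw [← ENNReal.ofReal_pow hq0, ← ENNReal.ofReal_mul (by positivity), mul_assoc, ← pow_add]
    exact ENNReal.ofReal_le_ofReal (by simpa [add_assoc] using hgeo k (k + e + j) (by omega))
  calc ∑' j, ENNReal.ofReal (ε (k + e + j) / ε k)
      ≤ ∑' j, ENNReal.ofReal (K * (1 - K⁻¹) ^ e) * ENNReal.ofReal (1 - K⁻¹) ^ j :=
        ENNReal.tsum_le_tsum hterm
    _ = ENNReal.ofReal (K ^ 2 * (1 - K⁻¹) ^ e) := by
        rw [ENNReal.tsum_mul_left, ENNReal.tsum_ofReal_one_sub_inv_pow hK,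
          ← ENNReal.ofReal_mul (by positivity)]
        ring_nf

theorem stmt_8_general (δ : ℕ → ℝ≥0∞)
    (ε : ℕ → ℝ)
    (K : ℝ) (hK1 : 1 < K) (hK2 : K ≤ 2)
    (hgeo : ∀ k ℓ : ℕ, k ≤ ℓ → ε ℓ / ε k ≤ K * (1 - K⁻¹) ^ (ℓ - k)) :
    ∀ m : ℕ, 1 ≤ m →
      ∑' ℓ : ℕ, ∑ k ∈ Finset.range (m + ℓ + 1),
          ENNReal.ofReal (ε (m + ℓ) / ε k) * δ k ≤
        ENNReal.ofReal (9 * max ((m : ℝ)⁻¹) ((1 - K⁻¹) ^ (m - 1))) *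
          ((∑' k : ℕ, δ k) + ∑' k : ℕ, (k : ℝ≥0∞) * δ k) := by
  intro m hm
  set M := max ((m : ℝ)⁻¹) ((1 - K⁻¹) ^ (m - 1))
  have hM : ∀ k : ℕ, K ^ 2 * (1 - K⁻¹) ^ (m - k) ≤ 9 * M * (1 + k) := by
    intro k
    have hq0 : 0 ≤ 1 - K⁻¹ := sub_nonneg.2 (inv_le_one_of_one_le₀ hK1.le)
    have hq : 1 - K⁻¹ ≤ 2⁻¹ := by linarith [inv_anti₀ (by linarith) hK2]
    have hM0 : 0 ≤ M := (inv_nonneg.2 m.cast_nonneg).trans (le_max_left _ _)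
    calc K ^ 2 * (1 - K⁻¹) ^ (m - k) ≤ 2 ^ 2 * (2 * (k + 1) / m) := by
          gcongr; exact pow_sub_le_div hq0 hq hm k
      _ = 8 * (1 + k) * (m : ℝ)⁻¹ := by ring
      _ ≤ 8 * (1 + k) * M := by gcongr; exact le_max_left _ _
      _ ≤ 9 * M * (1 + k) := by nlinarith [mul_nonneg hM0 k.cast_nonneg]
  calc ∑' ℓ, ∑ k ∈ range (m + ℓ + 1), ENNReal.ofReal (ε (m + ℓ) / ε k) * δ k
      = ∑' k, (∑' j, ENNReal.ofReal (ε (k + (m - k) + j) / ε k)) * δ k := by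
        rw [ENNReal.tsum_sum_range_add_eq]
        refine tsum_congr fun k => ?_
        rw [← ENNReal.tsum_mul_right]
        exact tsum_congr fun j => by rw [show m + (j + (k - m)) = k + (m - k) + j by omega]
    _ ≤ ∑' k : ℕ, ENNReal.ofReal (9 * M * (1 + k)) * δ k := by
        gcongr with k
        exact (tsum_ofReal_div_le_of_geometric hK1.le hgeo k (m - k)).trans
          (ENNReal.ofReal_le_ofReal (hM k))
    _ = ENNReal.ofReal (9 * M) * ((∑' k, δ k) + ∑' k : ℕ, (k : ℝ≥0∞) * δ k) := by
        rw [← ENNReal.tsum_add, ← ENNReal.tsum_mul_left]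
        refine tsum_congr fun k => ?_
        rw [ENNReal.ofReal_mul (by positivity), ENNReal.ofReal_add zero_le_one k.cast_nonneg,
          ENNReal.ofReal_one, ENNReal.ofReal_natCast]
        ring

/-- The double-sum estimate
`∑_{ℓ=m}^∞ ∑_{k=0}^ℓ (ε_ℓ/ε_k) δ_k ≤ 9([δ]₀ + [δ]₁) max{m⁻¹, (1-K⁻¹)^{m-1}}`
for nonnegative `δ` with finite `[δ]₀, [δ]₁` and a decreasing positive sequence `ε`
with `ε₀ = 1` satisfying the geometric bound `ε_ℓ/ε_k ≤ K(1-K⁻¹)^{ℓ-k}`, `K ∈ (1,2]`. -/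
theorem stmt_8 (δ : ℕ → ℝ≥0∞)
    (h0 : ∑' k : ℕ, δ k < ∞) (h1 : ∑' k : ℕ, (k : ℝ≥0∞) * δ k < ∞)
    (ε : ℕ → ℝ) (hpos : ∀ j, 0 < ε j) (hdec : Antitone ε) (hε0 : ε 0 = 1)
    (K : ℝ) (hK1 : 1 < K) (hK2 : K ≤ 2)
    (hgeo : ∀ k ℓ : ℕ, k ≤ ℓ → ε ℓ / ε k ≤ K * (1 - K⁻¹) ^ (ℓ - k)) :
    ∀ m : ℕ, 1 ≤ m →
      ∑' ℓ : ℕ, ∑ k ∈ Finset.range (m + ℓ + 1),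
          ENNReal.ofReal (ε (m + ℓ) / ε k) * δ k ≤
        ENNReal.ofReal (9 * max ((m : ℝ)⁻¹) ((1 - K⁻¹) ^ (m - 1))) *
          ((∑' k : ℕ, δ k) + ∑' k : ℕ, (k : ℝ≥0∞) * δ k) :=
  stmt_8_general δ ε K hK1 hK2 hgeo
end

section
/- Let $(H_\ell)_{\ell \geq m_0}$ and $(h_\ell)_{\ell \geq m_0}$ be nonnegative reals, $C_1 \geq 1$, and $(M_\ell)_{\ell \geq m_0}$ nonnegative with $64 C_1^2 \sum_{\ell=m_0}^{\infty} M_\ell \leq 1$. Suppose for every $k \geq m_0$: (a) $\sum_{\ell=m_0}^{k+1} H_\ell \leq 6 H_{m_0} + \sum_{\ell=m_0}^{k} 8 C_1 M_\ell h_\ell$, and (b) $|h_{k+1} - h_{m_0}| \leq 2C_1 \sum_{\ell=m_0}^{k} H_\ell + \sum_{\ell=m_0}^{k} C_1 M_\ell h_\ell$. Then $\sum_{\ell=m_0}^{\infty} H_\ell + \sup_{\ell \geq m_0} h_\ell \leq C\,(H_{m_0} + h_{m_0})$ for a constant $C$ depending only on $C_1$. -/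
/-- Abstract iteration across all scales (proof of Theorem 4.5): from the accumulated
estimates (a) and (b) with summable small weights `M_ℓ`, one bounds
`∑_{ℓ≥m₀} H_ℓ + sup_{ℓ≥m₀} h_ℓ` by `C (H_{m₀} + h_{m₀})`, `C` depending only on `C₁`. -/
theorem stmt_10 (C₁ : ℝ) (hC₁ : 1 ≤ C₁) :
    ∃ C : ℝ, 0 < C ∧
      ∀ (m₀ : ℕ) (H h M : ℕ → ℝ),
        (∀ ℓ, 0 ≤ H ℓ) → (∀ ℓ, 0 ≤ h ℓ) → (∀ ℓ, 0 ≤ M ℓ) →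
        Summable (fun ℓ : ℕ => M (m₀ + ℓ)) →
        64 * C₁ ^ 2 * ∑' ℓ : ℕ, M (m₀ + ℓ) ≤ 1 →
        (∀ k : ℕ, m₀ ≤ k →
          ∑ ℓ ∈ Finset.Icc m₀ (k + 1), H ℓ ≤
            6 * H m₀ + ∑ ℓ ∈ Finset.Icc m₀ k, 8 * C₁ * M ℓ * h ℓ) →
        (∀ k : ℕ, m₀ ≤ k →
          |h (k + 1) - h m₀| ≤
            2 * C₁ * ∑ ℓ ∈ Finset.Icc m₀ k, H ℓ +
              ∑ ℓ ∈ Finset.Icc m₀ k, C₁ * M ℓ * h ℓ) →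
        Summable (fun ℓ : ℕ => H (m₀ + ℓ)) ∧
        BddAbove (Set.range fun ℓ : ℕ => h (m₀ + ℓ)) ∧
        (∑' ℓ : ℕ, H (m₀ + ℓ)) + (⨆ ℓ : ℕ, h (m₀ + ℓ)) ≤ C * (H m₀ + h m₀) := by
  refine ⟨33 * C₁, by positivity, ?_⟩
  intro m₀ H h M hH0 hh0 hM0 hMsum hMsmall ha hb
  set T : ℝ := ∑' ℓ : ℕ, M (m₀ + ℓ) with hT
  have hT0 : 0 ≤ T := tsum_nonneg fun ℓ => hM0 _
  set A : ℝ := 2 * h m₀ + 24 * C₁ * H m₀ with hAdef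
  have hA0 : 0 ≤ A := by nlinarith [hh0 m₀, hH0 m₀]
  -- partial sums of M are bounded by T
  have hMIcc : ∀ k : ℕ, ∑ ℓ ∈ Finset.Icc m₀ k, M ℓ ≤ T := by
    intro k
    rw [← Finset.Ico_add_one_right_eq_Icc, Finset.sum_Ico_eq_sum_range]
    exact Summable.sum_le_tsum _ (fun i _ => hM0 _) hMsum
  -- bound on weighted sums when h is bounded by A up to k
  have hMh : ∀ k : ℕ, (∀ j, m₀ ≤ j → j ≤ k → h j ≤ A) →
      ∑ ℓ ∈ Finset.Icc m₀ k, M ℓ * h ℓ ≤ A * T := by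
    intro k hj
    calc ∑ ℓ ∈ Finset.Icc m₀ k, M ℓ * h ℓ ≤ ∑ ℓ ∈ Finset.Icc m₀ k, M ℓ * A := by
          refine Finset.sum_le_sum fun ℓ hℓ => ?_
          rw [Finset.mem_Icc] at hℓ
          exact mul_le_mul_of_nonneg_left (hj ℓ hℓ.1 hℓ.2) (hM0 ℓ)
      _ = (∑ ℓ ∈ Finset.Icc m₀ k, M ℓ) * A := by rw [Finset.sum_mul]
      _ ≤ T * A := mul_le_mul_of_nonneg_right (hMIcc k) hA0
      _ = A * T := mul_comm _ _
  have hsum8 : ∀ k : ℕ, ∑ ℓ ∈ Finset.Icc m₀ k, 8 * C₁ * M ℓ * h ℓ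
      = 8 * C₁ * ∑ ℓ ∈ Finset.Icc m₀ k, M ℓ * h ℓ := by
    intro k; rw [Finset.mul_sum]; exact Finset.sum_congr rfl fun ℓ _ => by ring
  have hsum1 : ∀ k : ℕ, ∑ ℓ ∈ Finset.Icc m₀ k, C₁ * M ℓ * h ℓ
      = C₁ * ∑ ℓ ∈ Finset.Icc m₀ k, M ℓ * h ℓ := by
    intro k; rw [Finset.mul_sum]; exact Finset.sum_congr rfl fun ℓ _ => by ring
  -- key: h is bounded by A
  have hhA : ∀ k, m₀ ≤ k → h k ≤ A := by
    intro k
    induction k using Nat.strong_induction_on with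
    | _ k ih =>
      intro hk
      rcases eq_or_lt_of_le hk with rfl | hk'
      · nlinarith [hh0 m₀, hH0 m₀]
      · obtain ⟨k', rfl⟩ : ∃ k', k = k' + 1 := ⟨k - 1, by omega⟩
        have hk'm : m₀ ≤ k' := by omega
        have hAle : ∀ j, m₀ ≤ j → j ≤ k' → h j ≤ A := fun j hj hjk =>
          ih j (by omega) hj
        have hMhk := hMh k' hAle
        -- bound partial H-sum at k'
        have hSk : ∑ ℓ ∈ Finset.Icc m₀ k', H ℓ ≤ 6 * H m₀ + 8 * C₁ * (A * T) := by
          have h1 : ∑ ℓ ∈ Finset.Icc m₀ k', H ℓ ≤ ∑ ℓ ∈ Finset.Icc m₀ (k' + 1), H ℓ :=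
            Finset.sum_le_sum_of_subset_of_nonneg
              (Finset.Icc_subset_Icc_right (by omega)) (fun i _ _ => hH0 i)
          have h2 := ha k' hk'm
          rw [hsum8 k'] at h2
          nlinarith [hMhk]
        have h3 := hb k' hk'm
        rw [hsum1 k'] at h3
        have h4 : h (k' + 1) - h m₀ ≤ 2 * C₁ * ∑ ℓ ∈ Finset.Icc m₀ k', H ℓ +
            C₁ * ∑ ℓ ∈ Finset.Icc m₀ k', M ℓ * h ℓ := le_trans (le_abs_self _) h3
        -- now arithmetic: 16 C₁² A T ≤ A/4, C₁ A T ≤ A/64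
        have e1 : A * (64 * C₁ ^ 2 * T) ≤ A * 1 :=
          mul_le_mul_of_nonneg_left hMsmall hA0
        have e2 : 0 ≤ (C₁ ^ 2 - C₁) * (A * T) :=
          mul_nonneg (by nlinarith) (mul_nonneg hA0 hT0)
        have hSk' : 0 ≤ ∑ ℓ ∈ Finset.Icc m₀ k', H ℓ :=
          Finset.sum_nonneg fun i _ => hH0 i
        nlinarith [mul_le_mul_of_nonneg_left hSk (by linarith : (0:ℝ) ≤ 2 * C₁),
          mul_le_mul_of_nonneg_left hMhk (by linarith : (0:ℝ) ≤ C₁)]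
  -- uniform bound on partial sums of H
  have hS : ∀ k, m₀ ≤ k → ∑ ℓ ∈ Finset.Icc m₀ k, H ℓ ≤ 6 * H m₀ + 8 * C₁ * (A * T) := by
    intro k hk
    have h1 : ∑ ℓ ∈ Finset.Icc m₀ k, H ℓ ≤ ∑ ℓ ∈ Finset.Icc m₀ (k + 1), H ℓ :=
      Finset.sum_le_sum_of_subset_of_nonneg
        (Finset.Icc_subset_Icc_right (by omega)) (fun i _ _ => hH0 i)
    have h2 := ha k hk
    rw [hsum8 k] at h2
    have h3 := hMh k fun j hj hjk => hhA j hj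
    nlinarith
  set B : ℝ := 6 * H m₀ + 8 * C₁ * (A * T) with hBdef
  have hB0 : 0 ≤ B := by nlinarith [hH0 m₀, mul_nonneg hA0 hT0]
  have hrange : ∀ n : ℕ, ∑ i ∈ Finset.range n, H (m₀ + i) ≤ B := by
    intro n
    cases n with
    | zero => simpa using hB0
    | succ n' =>
      have := hS (m₀ + n') (Nat.le_add_right _ _)
      rw [← Finset.Ico_add_one_right_eq_Icc, Finset.sum_Ico_eq_sum_range] at this
      have harith : m₀ + n' + 1 - m₀ = n' + 1 := by omega
      rw [harith] at this
      exact this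
  have hHsum : Summable fun ℓ : ℕ => H (m₀ + ℓ) :=
    summable_of_sum_range_le (fun n => hH0 _) hrange
  have htsum : ∑' ℓ : ℕ, H (m₀ + ℓ) ≤ B :=
    Real.tsum_le_of_sum_range_le (fun n => hH0 _) hrange
  have hbdd : BddAbove (Set.range fun ℓ : ℕ => h (m₀ + ℓ)) := by
    refine ⟨A, ?_⟩
    rintro x ⟨ℓ, rfl⟩
    exact hhA (m₀ + ℓ) (Nat.le_add_right _ _)
  refine ⟨hHsum, hbdd, ?_⟩
  have hsup : (⨆ ℓ : ℕ, h (m₀ + ℓ)) ≤ A :=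
    ciSup_le fun ℓ => hhA (m₀ + ℓ) (Nat.le_add_right _ _)
  have e1 : A * (64 * C₁ ^ 2 * T) ≤ A * 1 := mul_le_mul_of_nonneg_left hMsmall hA0
  have e2 : 0 ≤ (C₁ ^ 2 - C₁) * (A * T) :=
    mul_nonneg (by nlinarith) (mul_nonneg hA0 hT0)
  nlinarith [hH0 m₀, hh0 m₀, htsum, hsup]
end
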